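/- (Schinzel's criterion) A self-inversive polynomial P(z) = Σ_{j=0}^d A_j z^j such that there exist c ∈ ℂ and μ ∈ ℂ with |μ| = 1 satisfying |A_d| ≥ Σ_{j=0}^d |c A_j − μ^(d−j) A_d| has all its zeros on the unit circle. -/

import Mathlib

/-!
Write the points of the unit circle as `μ e^{2iφ}` with `0 < φ < π`. Self-inversiveness makes
`F(φ) = δ e^{-idφ} P(μ e^{2iφ})` real for a suitable unimodular `δ`. Splitting `c P` along the
hypothesis gives `c e^{-idφ} P(μ e^{2iφ}) = E(φ) + μ^d A_d D(φ)` with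
`|E(φ)| ≤ ∑ |c A_j - μ^(d-j) A_d| ≤ |A_d|` and `D(φ) = ∑ e^{i(2j-d)φ} = sin((d+1)φ) / sin φ`, the
Dirichlet kernel. At the `d + 1` peaks `φ_k = (2k+1)π / (2(d+1))` of `sin((d+1)φ)` the kernel term
dominates, so the real part of `conj(μ^d A_d) c e^{-idφ} P(μ e^{2iφ})`, a constant multiple of `F`,
has sign `(-1)^k` there, and can only vanish at the peak `φ = π/2`. The intermediate value theorem
then gives at least `d - 1` distinct zeros of `P` on the circle, while a zero `z` off the circle
comes with a second one `1 / conj z`: together more than `d` zeros.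
-/

open Polynomial Finset ComplexConjugate

theorem exists_finset_zeros_of_alternating {g : ℝ → ℝ} (hg : Continuous g) {x : ℕ → ℝ}
    (hx : StrictMono x) {n m : ℕ} (hsign : ∀ k ≤ n, 0 ≤ (-1) ^ k * g (x k))
    (hzero : ∀ k ≤ n, g (x k) = 0 → k = m) :
    ∃ S : Finset ℝ, n - 1 ≤ #S ∧ ∀ y ∈ S, y ∈ Set.Icc (x 0) (x n) ∧ g y = 0 := by
  have hIVT : ∀ k < n, ∃ y ∈ Set.Icc (x k) (x (k + 1)), g y = 0 := by
    intro k hk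
    have hmem : (0 : ℝ) ∈ Set.Icc ((-1) ^ k * g (x (k + 1))) ((-1) ^ k * g (x k)) := by
      have := hsign (k + 1) hk
      rw [pow_succ] at this
      exact ⟨by linarith, hsign k hk.le⟩
    obtain ⟨y, hy, hy0⟩ := intermediate_value_Icc' (hx.monotone k.le_succ)
      (continuous_const.mul hg).continuousOn hmem
    exact ⟨y, hy, (mul_eq_zero.mp hy0).resolve_left (pow_ne_zero _ (by norm_num))⟩
  choose! y hy hy0 using hIVT
  -- consecutive intervals can only share a zero at the endpoint `x m`
  have hlt : ∀ k < n, k + 1 ≠ m → y k < x (k + 1) := fun k hk hkm =>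
    (hy k hk).2.lt_of_ne fun h => hkm (hzero (k + 1) hk (h ▸ hy0 k hk))
  have hmono : StrictMonoOn y ((range n).erase (m - 1)) := by
    intro k hk l hl hkl
    simp only [coe_erase, coe_range, Set.mem_sdiff, Set.mem_Iio, Set.mem_singleton_iff] at hk hl
    calc y k < x (k + 1) := hlt k hk.1 (by omega)
      _ ≤ x l := hx.monotone hkl
      _ ≤ y l := (hy l hl.1).1
  refine ⟨((range n).erase (m - 1)).image y, ?_, ?_⟩
  · rw [card_image_of_injOn hmono.injOn]
    simpa using pred_card_le_card_erase (s := range n) (a := m - 1)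
  · simp only [mem_image, mem_erase, mem_range]
    rintro _ ⟨k, ⟨-, hk⟩, rfl⟩
    exact ⟨⟨(hx.monotone (Nat.zero_le k)).trans (hy k hk).1,
      (hy k hk).2.trans (hx.monotone hk)⟩, hy0 k hk⟩

section PeakAngle

open Real

noncomputable def peakAngle (d k : ℕ) : ℝ := (2 * k + 1) * π / (2 * (d + 1))

theorem peakAngle_strictMono (d : ℕ) : StrictMono (peakAngle d) := by
  intro k l hkl
  have : (k : ℝ) < l := by exact_mod_cast hkl
  unfold peakAngle
  gcongr

theorem peakAngle_pos (d k : ℕ) : 0 < peakAngle d k := by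
  unfold peakAngle; positivity

theorem peakAngle_lt_pi {d k : ℕ} (hk : k ≤ d) : peakAngle d k < π := by
  have : (k : ℝ) ≤ d := by exact_mod_cast hk
  unfold peakAngle
  rw [div_lt_iff₀ (by positivity)]
  nlinarith [pi_pos]

theorem sin_mul_peakAngle (d k : ℕ) : sin ((d + 1) * peakAngle d k) = (-1) ^ k := by
  have : ((d : ℝ) + 1) * peakAngle d k = k * π + π / 2 := by
    unfold peakAngle; field_simp
  rw [this, sin_add_pi_div_two, cos_nat_mul_pi]

theorem two_mul_eq_of_sin_peakAngle_eq_one {d k : ℕ} (hk : k ≤ d)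
    (h : sin (peakAngle d k) = 1) : 2 * k = d := by
  have hcos : cos (peakAngle d k) = cos (π / 2) := by
    rw [cos_pi_div_two]
    nlinarith [sin_sq_add_cos_sq (peakAngle d k)]
  have hpi := injOn_cos ⟨(peakAngle_pos d k).le, (peakAngle_lt_pi hk).le⟩
    ⟨by positivity, by linarith [pi_pos]⟩ hcos
  unfold peakAngle at hpi
  field_simp at hpi
  have : (2 * k : ℝ) = d := by nlinarith [pi_pos]
  exact_mod_cast this

end PeakAngle

namespace Complex

theorem sum_exp_mul_sin (x : ℂ) (n : ℕ) :
    (∑ j ∈ range (n + 1), exp ((2 * j - n) * x * I)) * sin x = sin ((n + 1) * x) := by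
  set f : ℕ → ℂ := fun j => exp ((2 * j - n - 1) * x * I)
  have hterm (j : ℕ) : exp ((2 * j - n) * x * I) * sin x = (f j - f (j + 1)) * I / 2 := by
    have h₁ : f j = exp ((2 * j - n) * x * I) * exp (-x * I) := by
      simp only [f, ← exp_add]; ring_nf
    have h₂ : f (j + 1) = exp ((2 * j - n) * x * I) * exp (x * I) := by
      simp only [f, ← exp_add]; push_cast; ring_nf
    rw [h₁, h₂, sin]
    ring
  rw [sum_mul, sum_congr rfl fun j _ => hterm j, ← sum_div, ← sum_mul, sum_range_sub', sin]
  simp only [f]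
  push_cast
  ring_nf

theorem re_sum_exp_mul_sin (n : ℕ) (φ : ℝ) :
    (∑ j ∈ range (n + 1), exp ((2 * j - n) * φ * I)).re * Real.sin φ =
      Real.sin ((n + 1) * φ) := by
  have h := congrArg re (sum_exp_mul_sin φ n)
  rwa [← ofReal_sin, re_mul_ofReal, ← ofReal_natCast, ← ofReal_one, ← ofReal_add,
    ← ofReal_mul, ← ofReal_sin, ofReal_re] at h

theorem eq_zero_of_re_mul_eq_zero {κ l z z₀ : ℂ} (hl : l ≠ 0) (hz : conj (l * z) = l * z)
    (hz₀ : conj (l * z₀) = l * z₀) (h₀ : (κ * z₀).re ≠ 0) (h : (κ * z).re = 0) : z = 0 := by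
  have hre {w : ℂ} (hw : conj (l * w) = l * w) : (κ * w).re = (κ / l).re * (l * w).re := by
    rw [← re_mul_ofReal, conj_eq_iff_re.mp hw]
    congr 1
    field_simp
  rw [hre hz₀] at h₀
  rw [hre hz] at h
  have hlz : l * z = 0 := by
    rw [← conj_eq_iff_re.mp hz, (mul_eq_zero.mp h).resolve_left (left_ne_zero_of_mul h₀),
      ofReal_zero]
  exact (mul_eq_zero.mp hlz).resolve_left hl

theorem injOn_mul_exp_two_mul_I {μ : ℂ} (hμ : μ ≠ 0) {a b : ℝ} (hab : b - a < Real.pi) :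
    Set.InjOn (fun φ : ℝ => μ * exp (2 * φ * I)) (Set.Icc a b) := by
  intro φ hφ ψ hψ h
  have h2 : Circle.exp (2 * φ) = Circle.exp (2 * ψ) := by
    ext
    simpa [Circle.coe_exp, hμ] using h
  have := Circle.exp_injOn_Icc (a := 2 * a) (b := 2 * b) (by linarith)
    ⟨by linarith [hφ.1], by linarith [hφ.2]⟩ ⟨by linarith [hψ.1], by linarith [hψ.2]⟩ h2
  linarith

theorem norm_mul_exp_two_mul_I {μ : ℂ} (hμ : ‖μ‖ = 1) (φ : ℝ) : ‖μ * exp (2 * φ * I)‖ = 1 := by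
  rw [norm_mul, hμ, one_mul, ← ofReal_ofNat, ← ofReal_mul, norm_exp_ofReal_mul_I]

theorem norm_exp_mul_sum_le {μ : ℂ} (hμ : ‖μ‖ = 1) {d : ℕ} (b : ℕ → ℂ) (φ : ℝ) :
    ‖exp (-(d * φ) * I) * ∑ j ∈ range (d + 1), b j * (μ * exp (2 * φ * I)) ^ j‖ ≤
      ∑ j ∈ range (d + 1), ‖b j‖ := by
  have he : ‖exp (-(d * φ) * I)‖ = 1 := by
    rw [← ofReal_natCast, ← ofReal_mul, ← ofReal_neg, norm_exp_ofReal_mul_I]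
  rw [norm_mul, he, one_mul]
  refine (norm_sum_le _ _).trans_eq (sum_congr rfl fun j _ => ?_)
  rw [norm_mul, norm_pow, norm_mul_exp_two_mul_I hμ, one_pow, mul_one]

theorem ne_inv_conj_of_norm_ne_one {z : ℂ} (hz0 : z ≠ 0) (hz : ‖z‖ ≠ 1) : z ≠ (conj z)⁻¹ := by
  intro h
  have h1 : ‖z‖ = ‖z‖⁻¹ := by simpa using congrArg norm h
  have h2 : ‖z‖ * ‖z‖ = 1 := by
    nth_rewrite 2 [h1]
    exact mul_inv_cancel₀ (norm_ne_zero_iff.mpr hz0)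
  exact hz (by nlinarith [norm_nonneg z])

end Complex

namespace Polynomial

open Complex

variable {P : ℂ[X]} {d : ℕ} {ε μ : ℂ}

theorem eval_eq_mul_pow_mul_conj_eval_inv_conj (hd : P.natDegree = d)
    (hsi : ∀ j ≤ d, P.coeff j = ε * conj (P.coeff (d - j))) {w : ℂ} (hw : w ≠ 0) :
    P.eval w = ε * w ^ d * conj (P.eval (conj w)⁻¹) := by
  rw [eval_eq_sum_range, eval_eq_sum_range, hd, map_sum, mul_sum, ← sum_range_reflect]
  refine sum_congr rfl fun j hj => ?_
  have hjd : j ≤ d := Nat.lt_succ_iff.mp (mem_range.mp hj)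
  have hsplit : w ^ d = w ^ (d - j) * w ^ j := by rw [← pow_add, Nat.sub_add_cancel hjd]
  rw [Nat.add_sub_cancel, hsi (d - j) (Nat.sub_le d j), Nat.sub_sub_self hjd, map_mul, map_pow,
    map_inv₀, conj_conj, inv_pow, hsplit]
  field_simp

theorem eval_inv_conj_eq_zero (hd : P.natDegree = d)
    (hsi : ∀ j ≤ d, P.coeff j = ε * conj (P.coeff (d - j))) {z : ℂ} (hz0 : z ≠ 0)
    (hz : P.eval z = 0) : P.eval (conj z)⁻¹ = 0 := by
  rw [eval_eq_mul_pow_mul_conj_eval_inv_conj hd hsi (by simpa using hz0)]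
  simp [hz]

theorem conj_mul_eval_eq_self (hε : ‖ε‖ = 1) (hd : P.natDegree = d)
    (hsi : ∀ j ≤ d, P.coeff j = ε * conj (P.coeff (d - j))) {w a : ℂ} (hw : ‖w‖ = 1)
    (ha : a ^ 2 * ε * w ^ d = 1) : conj (a * P.eval w) = a * P.eval w := by
  have ha1 : ‖a‖ = 1 := by
    have := congrArg norm ha
    rw [norm_mul, norm_mul, norm_pow, norm_pow, hε, hw, one_pow, mul_one, mul_one,
      norm_one] at this
    exact (pow_eq_one_iff_of_nonneg (norm_nonneg a) two_ne_zero).mp this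
  have hw0 : w ≠ 0 := norm_ne_zero_iff.mp (by rw [hw]; exact one_ne_zero)
  have hinv : a * (ε * w ^ d) = a⁻¹ := by
    refine eq_inv_of_mul_eq_one_left ?_
    linear_combination ha
  nth_rewrite 2 [eval_eq_mul_pow_mul_conj_eval_inv_conj hd hsi hw0]
  rw [← inv_eq_conj hw, inv_inv, map_mul, ← inv_eq_conj ha1, ← mul_assoc, hinv]

noncomputable def centeredEval (P : ℂ[X]) (d : ℕ) (μ : ℂ) (φ : ℝ) : ℂ :=
  exp (-(d * φ) * I) * P.eval (μ * exp (2 * φ * I))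

theorem conj_mul_centeredEval {δ : ℂ} (hε : ‖ε‖ = 1) (hd : P.natDegree = d)
    (hsi : ∀ j ≤ d, P.coeff j = ε * conj (P.coeff (d - j))) (hμ : ‖μ‖ = 1)
    (hδ : δ ^ 2 * ε * μ ^ d = 1) (φ : ℝ) :
    conj (δ * P.centeredEval d μ φ) = δ * P.centeredEval d μ φ := by
  have he : exp (-(d * φ) * I) ^ 2 * exp (2 * φ * I) ^ d = 1 := by
    rw [← exp_nat_mul, ← exp_nat_mul, ← exp_add, ← exp_zero]
    push_cast
    ring_nf
  have ha : (δ * exp (-(d * φ) * I)) ^ 2 * ε * (μ * exp (2 * φ * I)) ^ d = 1 := by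
    linear_combination δ ^ 2 * ε * μ ^ d * he + hδ
  rw [centeredEval, ← mul_assoc,
    conj_mul_eval_eq_self hε hd hsi (norm_mul_exp_two_mul_I hμ φ) ha]

theorem mul_centeredEval_eq (hd : P.natDegree = d) (c : ℂ) (φ : ℝ) :
    c * P.centeredEval d μ φ =
      exp (-(d * φ) * I) * ∑ j ∈ range (d + 1),
          (c * P.coeff j - μ ^ (d - j) * P.coeff d) * (μ * exp (2 * φ * I)) ^ j +
        μ ^ d * P.coeff d * ∑ j ∈ range (d + 1), exp ((2 * j - d) * φ * I) := by
  simp only [centeredEval, eval_eq_sum_range, hd, mul_sum, ← sum_add_distrib]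
  refine sum_congr rfl fun j hj => ?_
  have hjd : j ≤ d := Nat.lt_succ_iff.mp (mem_range.mp hj)
  have hpow : exp (-(d * φ) * I) * (μ * exp (2 * φ * I)) ^ j * μ ^ (d - j) =
      μ ^ d * exp ((2 * j - d) * φ * I) := by
    have hμd : μ ^ d = μ ^ j * μ ^ (d - j) := by rw [← pow_add, Nat.add_sub_cancel' hjd]
    rw [mul_pow, ← exp_nat_mul, hμd]
    calc _ = μ ^ j * μ ^ (d - j) * exp (-(d * φ) * I + j * (2 * φ * I)) := by
          rw [exp_add]; ring
      _ = _ := by ring_nf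
  linear_combination P.coeff d * hpow

theorem exists_sin_mul_re_conj_mul_centeredEval_eq (hd : P.natDegree = d) (hμ : ‖μ‖ = 1)
    (c : ℂ) (φ : ℝ) :
    ∃ r : ℝ, |r| ≤ ‖P.coeff d‖ * ∑ j ∈ range (d + 1), ‖c * P.coeff j - μ ^ (d - j) * P.coeff d‖ ∧
      Real.sin φ * (conj (μ ^ d * P.coeff d) * c * P.centeredEval d μ φ).re =
        Real.sin φ * r + ‖P.coeff d‖ ^ 2 * Real.sin ((d + 1) * φ) := by
  have h := mul_centeredEval_eq (μ := μ) hd c φ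
  set b := μ ^ d * P.coeff d
  set E := exp (-(d * φ) * I) * ∑ j ∈ range (d + 1),
    (c * P.coeff j - μ ^ (d - j) * P.coeff d) * (μ * exp (2 * φ * I)) ^ j
  set D := ∑ j ∈ range (d + 1), exp ((2 * j - d) * φ * I)
  have hb : ‖b‖ = ‖P.coeff d‖ := by rw [norm_mul, norm_pow, hμ, one_pow, one_mul]
  have hbb : conj b * b = (‖P.coeff d‖ ^ 2 : ℝ) := by rw [conj_mul', hb]; push_cast; rfl
  have hsplit : conj b * c * P.centeredEval d μ φ = conj b * E + (‖P.coeff d‖ ^ 2 : ℝ) * D := by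
    linear_combination conj b * h + D * hbb
  refine ⟨(conj b * E).re, ?_, ?_⟩
  · calc |(conj b * E).re| ≤ ‖conj b * E‖ := abs_re_le_norm _
      _ ≤ _ := by
        rw [norm_mul, RCLike.norm_conj, hb]
        exact mul_le_mul_of_nonneg_left (norm_exp_mul_sum_le hμ _ φ) (norm_nonneg _)
  · have hD : D.re * Real.sin φ = Real.sin ((d + 1) * φ) := re_sum_exp_mul_sin d φ
    rw [hsplit, add_re, re_ofReal_mul, ← hD]
    ring

theorem sign_re_conj_mul_centeredEval_peakAngle (hd : P.natDegree = d) (hμ : ‖μ‖ = 1)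
    (hAd : P.coeff d ≠ 0) {c : ℂ}
    (hineq : ∑ j ∈ range (d + 1), ‖c * P.coeff j - μ ^ (d - j) * P.coeff d‖ ≤ ‖P.coeff d‖)
    {k : ℕ} (hk : k ≤ d) :
    0 ≤ (-1) ^ k * (conj (μ ^ d * P.coeff d) * c * P.centeredEval d μ (peakAngle d k)).re ∧
      ((conj (μ ^ d * P.coeff d) * c * P.centeredEval d μ (peakAngle d k)).re = 0 →
        2 * k = d) := by
  obtain ⟨r, hr, h⟩ := exists_sin_mul_re_conj_mul_centeredEval_eq hd hμ c (peakAngle d k)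
  rw [sin_mul_peakAngle] at h
  set v := (conj (μ ^ d * P.coeff d) * c * P.centeredEval d μ (peakAngle d k)).re
  set s := Real.sin (peakAngle d k)
  have hs : 0 < s := Real.sin_pos_of_pos_of_lt_pi (peakAngle_pos d k) (peakAngle_lt_pi hk)
  have hM : 0 < ‖P.coeff d‖ := norm_pos_iff.mpr hAd
  have hr' : |(-1) ^ k * r| ≤ ‖P.coeff d‖ ^ 2 := by
    rw [abs_mul, abs_pow, abs_neg, abs_one, one_pow, one_mul, sq]
    exact hr.trans (mul_le_mul_of_nonneg_left hineq hM.le)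
  have hsv : s * ((-1) ^ k * v) = s * ((-1) ^ k * r) + ‖P.coeff d‖ ^ 2 := by
    linear_combination (-1) ^ k * h +
      ‖P.coeff d‖ ^ 2 * pow_mul_pow_eq_one k (by norm_num : (-1 : ℝ) * -1 = 1)
  have hlow : ‖P.coeff d‖ ^ 2 * (1 - s) ≤ s * ((-1) ^ k * v) := by
    nlinarith [neg_abs_le ((-1) ^ k * r)]
  refine ⟨nonneg_of_mul_nonneg_right (hlow.trans' ?_) hs, fun hv => ?_⟩
  · exact mul_nonneg (by positivity) (sub_nonneg.mpr (Real.sin_le_one _))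
  · rw [hv, mul_zero, mul_zero] at hlow
    exact two_mul_eq_of_sin_peakAngle_eq_one hk
      (le_antisymm (Real.sin_le_one _) (by nlinarith [pow_pos hM 2]))

theorem exists_finset_roots_norm_eq_one {c : ℂ} (hε : ‖ε‖ = 1) (hd : P.natDegree = d)
    (hsi : ∀ j ≤ d, P.coeff j = ε * conj (P.coeff (d - j))) (hμ : ‖μ‖ = 1)
    (hAd : P.coeff d ≠ 0)
    (hineq : ∑ j ∈ range (d + 1), ‖c * P.coeff j - μ ^ (d - j) * P.coeff d‖ ≤ ‖P.coeff d‖) :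
    ∃ S : Finset ℂ, d - 1 ≤ #S ∧ ∀ w ∈ S, ‖w‖ = 1 ∧ P.eval w = 0 := by
  rcases Nat.eq_zero_or_pos d with rfl | hd0
  · exact ⟨∅, by simp, by simp⟩
  have hμ0 : μ ≠ 0 := norm_ne_zero_iff.mp (by rw [hμ]; exact one_ne_zero)
  have hε0 : ε ≠ 0 := norm_ne_zero_iff.mp (by rw [hε]; exact one_ne_zero)
  obtain ⟨δ, hδ⟩ := IsAlgClosed.exists_pow_nat_eq (ε * μ ^ d)⁻¹ two_pos
  have hδ' : δ ^ 2 * ε * μ ^ d = 1 := by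
    rw [hδ, mul_assoc, inv_mul_cancel₀ (mul_ne_zero hε0 (pow_ne_zero _ hμ0))]
  have hδ0 : δ ≠ 0 := by rintro rfl; simp at hδ'
  set g := fun φ : ℝ => (conj (μ ^ d * P.coeff d) * c * P.centeredEval d μ φ).re
  have hg : Continuous g := by unfold g centeredEval; fun_prop
  have hsign := fun k (hk : k ≤ d) => sign_re_conj_mul_centeredEval_peakAngle hd hμ hAd hineq hk
  obtain ⟨Y, hYcard, hY⟩ := exists_finset_zeros_of_alternating hg (peakAngle_strictMono d)
    (m := d / 2) (fun k hk => (hsign k hk).1) (fun k hk h => by have := (hsign k hk).2 h; omega)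
  have hg₀ : g (peakAngle d 0) ≠ 0 := fun h => by have := (hsign 0 (Nat.zero_le d)).2 h; omega
  have hroot : ∀ φ ∈ Y, P.eval (μ * exp (2 * φ * I)) = 0 := by
    intro φ hφ
    -- `g` is a constant multiple of the real function `δ * centeredEval`, nonzero at the first peak
    have hF := eq_zero_of_re_mul_eq_zero hδ0 (conj_mul_centeredEval hε hd hsi hμ hδ' φ)
      (conj_mul_centeredEval hε hd hsi hμ hδ' (peakAngle d 0)) hg₀ (hY φ hφ).2
    simpa [centeredEval, exp_ne_zero] using hF
  refine ⟨Y.image fun φ : ℝ => μ * exp (2 * φ * I), ?_, ?_⟩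
  · rw [card_image_of_injOn]
    · exact hYcard
    · refine (injOn_mul_exp_two_mul_I hμ0 ?_).mono fun φ hφ => (hY φ hφ).1
      linarith [peakAngle_pos d 0, peakAngle_lt_pi (le_refl d)]
  · simp only [mem_image]
    rintro _ ⟨φ, hφ, rfl⟩
    exact ⟨norm_mul_exp_two_mul_I hμ φ, hroot φ hφ⟩

end Polynomial

theorem stmt_12 (P : Polynomial ℂ) (d : ℕ) (ε c μ : ℂ) (hd : P.natDegree = d)
    (hAd : P.coeff d ≠ 0) (hε : ‖ε‖ = 1)
    (hsi : ∀ j ≤ d, P.coeff j = ε * (starRingEnd ℂ) (P.coeff (d - j)))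
    (hμ : ‖μ‖ = 1)
    (hineq : ∑ j ∈ Finset.range (d + 1),
        ‖c * P.coeff j - μ ^ (d - j) * P.coeff d‖
      ≤ ‖P.coeff d‖) :
    ∀ z : ℂ, P.eval z = 0 → ‖z‖ = 1 := by
  intro z hz
  by_contra hz1
  obtain ⟨S, hS, hSroots⟩ := exists_finset_roots_norm_eq_one hε hd hsi hμ hAd hineq
  have hz0 : z ≠ 0 := by
    rintro rfl
    have h0 := hsi 0 (Nat.zero_le d)
    rw [coeff_zero_eq_eval_zero, hz, Nat.sub_zero, eq_comm, mul_eq_zero, map_eq_zero] at h0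
    exact h0.elim (fun h => by simp [h] at hε) hAd
  have hz' := eval_inv_conj_eq_zero hd hsi hz0 hz
  have hP : P ≠ 0 := by rintro rfl; simp at hAd
  have hcard : #(insert z (insert (conj z)⁻¹ S)) ≤ d :=
    hd ▸ card_le_degree_of_subset_roots fun w hw => by
      simp only [insert_val, Multiset.mem_ndinsert, mem_val] at hw
      rw [mem_roots hP]
      rcases hw with rfl | rfl | hw
      exacts [hz, hz', (hSroots w hw).2]
  rw [card_insert_of_notMem, card_insert_of_notMem] at hcard
  · omega
  · exact fun h => hz1 (by simpa using (hSroots _ h).1)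
  · simp only [mem_insert, not_or]
    exact ⟨Complex.ne_inv_conj_of_norm_ne_one hz0 hz1, fun h => hz1 (hSroots z h).1⟩
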